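/- Let n ≥ 3 and P = ℚ[X₁,…,X_{2n}]. Let 𝔟⁺ be the ideal of P generated by all Xᵢ² (i = 1,…,2n) and all e_{n−1}(Xᵢ : i ∈ {1} ∪ T) for subsets T ⊆ {2,…,2n} with |T| = n−1, where e_{n−1} is the elementary symmetric polynomial of degree n−1. Then the images in P/𝔟⁺ of the monomials X₁·∏_{j∈K} X_j, where K ranges over all subsets of {2,…,2n} with |K| = n−2, are linearly independent over ℚ. -/

import Mathlib

/-!
Fix `K` and put `S = {1} ∪ K`. The functional on `P` taking the coefficient of the squarefree
monomial `X_S` minus the coefficients of the `X_T` with `1 ∉ T ⊇ K`, `|T| = n - 1`, vanishes on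
every multiple of a generator of `𝔟⁺`: multiples of `Xᵢ²` have no squarefree coefficients, and the
coefficient of a squarefree `X_U` with `|U| = n - 1` in `g · e_{n-1}({1} ∪ T)` is
`[U ⊆ {1} ∪ T] · g(0)`, so the two contributions of `g · e_{n-1}({1} ∪ T)` cancel. It therefore
descends to `P/𝔟⁺`, where it takes the value `1` on the class of `X₁ X_K` and `0` on the classes
of the other `X₁ X_{K'}`.
-/

open MvPolynomial Finset

noncomputable section

/-- e_j(Xᵢ : i ∈ I), the elementary symmetric polynomial in the variables indexed by I. -/
def esF {N : ℕ} (I : Finset (Fin N)) (j : ℕ) : MvPolynomial (Fin N) ℚ :=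
  ∑ J ∈ powersetCard j I, ∏ i ∈ J, X i

section SquarefreeMonomials

variable {σ R : Type*} [CommSemiring R]

def sqfreeExponent (S : Finset σ) : σ →₀ ℕ := ∑ i ∈ S, Finsupp.single i 1

theorem toMultiset_sqfreeExponent (S : Finset σ) :
    Finsupp.toMultiset (sqfreeExponent S) = S.val := by
  simp [sqfreeExponent]

theorem sqfreeExponent_le_iff [DecidableEq σ] {S T : Finset σ} :
    sqfreeExponent S ≤ sqfreeExponent T ↔ S ⊆ T := by
  rw [← Finsupp.orderIsoMultiset.le_iff_le, Finsupp.coe_orderIsoMultiset,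
    toMultiset_sqfreeExponent, toMultiset_sqfreeExponent, val_le_iff]

theorem sqfreeExponent_injective : Function.Injective (sqfreeExponent (σ := σ)) :=
  fun S T h => val_injective <| by
    rw [← toMultiset_sqfreeExponent, h, toMultiset_sqfreeExponent]

theorem sqfreeExponent_apply_le_one [DecidableEq σ] (S : Finset σ) (i : σ) :
    sqfreeExponent S i ≤ 1 := by
  rw [← Finsupp.count_toMultiset, toMultiset_sqfreeExponent, Multiset.count_eq_of_nodup S.nodup]
  split_ifs <;> simp

theorem prod_X_eq_monomial_sqfreeExponent (S : Finset σ) :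
    ∏ i ∈ S, X i = (monomial (sqfreeExponent S) 1 : MvPolynomial σ R) :=
  (monomial_sum_one S _).symm

theorem coeff_sqfreeExponent_mul_X_sq [DecidableEq σ] (T : Finset σ) (g : MvPolynomial σ R)
    (i : σ) : coeff (sqfreeExponent T) (g * X i ^ 2) = 0 := by
  rw [X_pow_eq_monomial, coeff_mul_monomial', if_neg]
  intro h
  have := (h i).trans (sqfreeExponent_apply_le_one T i)
  simp at this

theorem coeff_sqfreeExponent_mul_prod_X [DecidableEq σ] {S J : Finset σ} (hJS : J.card = S.card)
    (g : MvPolynomial σ R) :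
    coeff (sqfreeExponent S) (g * ∏ i ∈ J, X i) = if J = S then coeff 0 g else 0 := by
  rw [prod_X_eq_monomial_sqfreeExponent, coeff_mul_monomial', mul_one]
  by_cases h : J = S
  · simp [h]
  · rw [if_neg (sqfreeExponent_le_iff.not.mpr fun hsub => h (eq_of_subset_of_card_le hsub hJS.ge)),
      if_neg h]

theorem coeff_sqfreeExponent_mul_esymm [DecidableEq σ] {S : Finset σ} {m : ℕ} (hS : S.card = m)
    (I : Finset σ) (g : MvPolynomial σ R) :
    coeff (sqfreeExponent S) (g * ∑ J ∈ powersetCard m I, ∏ i ∈ J, X i) =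
      if S ⊆ I then coeff 0 g else 0 := by
  rw [mul_sum, coeff_sum, sum_congr rfl fun J hJ =>
    coeff_sqfreeExponent_mul_prod_X ((mem_powersetCard.mp hJ).2.trans hS.symm) g, sum_ite_eq']
  simp [mem_powersetCard, hS]

end SquarefreeMonomials

section SeparatingFunctional

variable {σ R : Type*} [Fintype σ] [DecidableEq σ] [CommRing R]

def correctionSets (i₀ : σ) (S : Finset σ) (m : ℕ) : Finset (Finset σ) :=
  {T ∈ powersetCard m univ | i₀ ∉ T ∧ S.erase i₀ ⊆ T}

theorem mem_correctionSets {i₀ : σ} {S T : Finset σ} {m : ℕ} :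
    T ∈ correctionSets i₀ S m ↔ T.card = m ∧ i₀ ∉ T ∧ S.erase i₀ ⊆ T := by
  simp [correctionSets]

def separatingFunctional (i₀ : σ) (S : Finset σ) (m : ℕ) : MvPolynomial σ R →ₗ[R] R :=
  lcoeff R (sqfreeExponent S) - ∑ T ∈ correctionSets i₀ S m, lcoeff R (sqfreeExponent T)

theorem separatingFunctional_apply (i₀ : σ) (S : Finset σ) (m : ℕ) (f : MvPolynomial σ R) :
    separatingFunctional i₀ S m f = coeff (sqfreeExponent S) f -
      ∑ T ∈ correctionSets i₀ S m, coeff (sqfreeExponent T) f := by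
  simp [separatingFunctional]

theorem separatingFunctional_mul_X_sq (i₀ : σ) (S : Finset σ) (m : ℕ) (g : MvPolynomial σ R)
    (i : σ) : separatingFunctional i₀ S m (g * X i ^ 2) = 0 := by
  simp [separatingFunctional_apply, coeff_sqfreeExponent_mul_X_sq]

theorem separatingFunctional_mul_esymm {i₀ : σ} {S T : Finset σ} {m : ℕ} (hS : S.card = m)
    (hi₀T : i₀ ∉ T) (hT : T.card = m) (g : MvPolynomial σ R) :
    separatingFunctional i₀ S m (g * ∑ J ∈ powersetCard m (insert i₀ T), ∏ i ∈ J, X i) = 0 := by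
  have hcorr : ∀ T' ∈ correctionSets i₀ S m,
      coeff (sqfreeExponent T') (g * ∑ J ∈ powersetCard m (insert i₀ T), ∏ i ∈ J, X i) =
        if T' = T then coeff 0 g else 0 := by
    intro T' hT'
    obtain ⟨hT'm, hi₀T', -⟩ := mem_correctionSets.mp hT'
    rw [coeff_sqfreeExponent_mul_esymm hT'm]
    refine if_congr ((subset_insert_iff_of_notMem hi₀T').trans ⟨fun h => ?_, fun h => h.subset⟩)
      rfl rfl
    exact eq_of_subset_of_card_le h (hT.trans hT'm.symm).le
  rw [separatingFunctional_apply, coeff_sqfreeExponent_mul_esymm hS, sum_congr rfl hcorr,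
    sum_ite_eq']
  simp [subset_insert_iff, mem_correctionSets, hi₀T, hT]

theorem separatingFunctional_X_mul_prod_X (i₀ : σ) (S : Finset σ) (m : ℕ) {K : Finset σ}
    (hK : i₀ ∉ K) :
    separatingFunctional i₀ S m (X i₀ * ∏ k ∈ K, X k : MvPolynomial σ R) =
      if insert i₀ K = S then 1 else 0 := by
  rw [← prod_insert hK, prod_X_eq_monomial_sqfreeExponent, separatingFunctional_apply]
  have hcorr : ∀ T ∈ correctionSets i₀ S m,
      coeff (sqfreeExponent T) (monomial (sqfreeExponent (insert i₀ K)) (1 : R)) = 0 := by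
    intro T hT
    rw [coeff_monomial, if_neg (sqfreeExponent_injective.ne ?_)]
    rintro rfl
    exact (mem_correctionSets.mp hT).2.1 (mem_insert_self i₀ K)
  rw [sum_congr rfl hcorr, sum_const_zero, sub_zero, coeff_monomial]
  exact if_congr sqfreeExponent_injective.eq_iff rfl rfl

end SeparatingFunctional

theorem LinearMap.apply_eq_zero_of_mem_ideal_span {R A M : Type*} [CommSemiring R]
    [CommSemiring A] [Algebra R A] [AddCommMonoid M] [Module R M] (L : A →ₗ[R] M) {s : Set A}
    (hs : ∀ x ∈ s, ∀ g, L (g * x) = 0) {x : A} (hx : x ∈ Ideal.span s) : L x = 0 := by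
  suffices ∀ g, L (g * x) = 0 by simpa using this 1
  induction hx using Submodule.span_induction with
  | mem y hy => exact hs y hy
  | zero => simp
  | add y z _ _ hy hz => simp [mul_add, hy, hz]
  | smul r y _ hy => exact fun g => by simpa [mul_assoc] using hy (g * r)

theorem linearIndependent_quotient_mk_of_dual {R A ι : Type*} [CommRing R] [CommRing A]
    [Algebra R A] [DecidableEq ι] {I : Ideal A} (v : ι → A) (L : ι → A →ₗ[R] R)
    (hL : ∀ j, ∀ x ∈ I, L j x = 0) (hLv : ∀ i j, L j (v i) = if i = j then 1 else 0) :
    LinearIndependent R fun i => Ideal.Quotient.mk I (v i) := by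
  rw [linearIndependent_iff']
  intro s c hsum j hj
  have hmem : ∑ i ∈ s, c i • v i ∈ I := by
    rw [← Ideal.Quotient.eq_zero_iff_mem, ← Ideal.Quotient.mkₐ_eq_mk R, map_sum, ← hsum]
    simp [Ideal.Quotient.mkₐ_eq_mk]
  simpa [hLv, hj] using hL j _ hmem

theorem linearIndependent_X_mul_prod_X_mod_squares_esymm {σ R : Type*} [Fintype σ]
    [DecidableEq σ] [CommRing R] (i₀ : σ) {k m : ℕ} (hkm : k + 1 = m) :
    LinearIndependent R fun K : {K : Finset σ // i₀ ∉ K ∧ K.card = k} =>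
      Ideal.Quotient.mk (Ideal.span ({f : MvPolynomial σ R | ∃ i, f = X i ^ 2} ∪
        {f | ∃ T : Finset σ, i₀ ∉ T ∧ T.card = m ∧
          f = ∑ J ∈ powersetCard m (insert i₀ T), ∏ i ∈ J, X i}))
        (X i₀ * ∏ j ∈ K.1, X j) := by
  refine linearIndependent_quotient_mk_of_dual _
    (fun K => separatingFunctional i₀ (insert i₀ K.1) m) ?_ ?_
  · rintro ⟨K, hi₀K, hK⟩ x hx
    have hS : (insert i₀ K).card = m := by rw [card_insert_of_notMem hi₀K, hK, hkm]
    refine LinearMap.apply_eq_zero_of_mem_ideal_span _ ?_ hx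
    rintro y (⟨i, rfl⟩ | ⟨T, hi₀T, hT, rfl⟩) g
    · exact separatingFunctional_mul_X_sq _ _ _ g i
    · exact separatingFunctional_mul_esymm hS hi₀T hT g
  · rintro ⟨K, hi₀K, -⟩ ⟨K', hi₀K', -⟩
    rw [separatingFunctional_X_mul_prod_X _ _ _ hi₀K]
    refine if_congr ⟨fun h => Subtype.ext ?_, fun h => by cases h; rfl⟩ rfl rfl
    simpa [erase_insert hi₀K, erase_insert hi₀K'] using congrArg (erase · i₀) h

/-- Step in the proof of Theorem 6.1: the images in ℬ⁺ of the monomials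
X₁·∏_{j∈K} X_j, with K ⊆ {2,…,2n} and |K| = n−2, are linearly independent over ℚ. -/
theorem stmt17 (n : ℕ) (hn : 3 ≤ n)
    (b : Ideal (MvPolynomial (Fin (2 * n)) ℚ))
    (hb : b = Ideal.span
      ({f | ∃ i : Fin (2 * n), f = X i ^ 2} ∪
       {f | ∃ T : Finset (Fin (2 * n)), (⟨0, by omega⟩ : Fin (2 * n)) ∉ T ∧ T.card = n - 1 ∧
          f = esF (insert (⟨0, by omega⟩ : Fin (2 * n)) T) (n - 1)})) :
    LinearIndependent ℚ
      (fun K : {K : Finset (Fin (2 * n)) //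
          (⟨0, by omega⟩ : Fin (2 * n)) ∉ K ∧ K.card = n - 2} =>
        Ideal.Quotient.mk b (X (⟨0, by omega⟩ : Fin (2 * n)) * ∏ j ∈ K.1, X j)) := by
  subst hb
  exact linearIndependent_X_mul_prod_X_mod_squares_esymm _ (by omega)

end
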